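/- Let C = ⟨a, b⟩ be an HFP-code of type Q of length 4n, and let h be a divisor of n. Then π_a^h(a^n) ≠ a^n. -/
import Mathlib


/-- The action of a coordinate permutation `σ` on a binary vector:
`(permAct σ v) i = v (σ⁻¹ i)`. -/
def permAct {m : ℕ} (σ : Equiv.Perm (Fin m)) (v : Fin m → ZMod 2) : Fin m → ZMod 2 :=
  fun i => v (σ.symm i)

/-- The propelinear operation `x · y = x + π_x(y)`. -/
def pmul {m : ℕ} (π : (Fin m → ZMod 2) → Equiv.Perm (Fin m))
    (x y : Fin m → ZMod 2) : Fin m → ZMod 2 :=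
  x + permAct (π x) y

/-- Powers with respect to the propelinear operation. -/
def ppow {m : ℕ} (π : (Fin m → ZMod 2) → Equiv.Perm (Fin m))
    (g : Fin m → ZMod 2) : ℕ → Fin m → ZMod 2
  | 0 => 0
  | k + 1 => pmul π g (ppow π g k)

/-- The all-ones vector. -/
def allOnes (m : ℕ) : Fin m → ZMod 2 := fun _ => 1


lemma permAct_one {m : ℕ} (v : Fin m → ZMod 2) : permAct 1 v = v := rfl

lemma permAct_mul {m : ℕ} (σ τ : Equiv.Perm (Fin m)) (v : Fin m → ZMod 2) :
    permAct (σ * τ) v = permAct σ (permAct τ v) := rfl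

lemma permAct_add {m : ℕ} (σ : Equiv.Perm (Fin m)) (v w : Fin m → ZMod 2) :
    permAct σ (v + w) = permAct σ v + permAct σ w := rfl

/-- Let `C = ⟨a, b⟩` be an HFP-code of type Q of length `4n` and `h` a divisor of `n`.
Then `π_a^h(aⁿ) ≠ aⁿ`. -/
theorem stmt_17 (n : ℕ) (hn : 0 < n) (C : Finset (Fin (4*n) → ZMod 2))
    (π : (Fin (4*n) → ZMod 2) → Equiv.Perm (Fin (4*n)))
    (h0 : (0 : Fin (4*n) → ZMod 2) ∈ C) (hu : allOnes (4*n) ∈ C)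
    (hcard : C.card = 8*n)
    (hclosed : ∀ x ∈ C, ∀ y ∈ C, pmul π x y ∈ C)
    (hhom : ∀ x ∈ C, ∀ y ∈ C, π (pmul π x y) = π x * π y)
    (hπ0 : π 0 = 1) (hπu : π (allOnes (4*n)) = 1)
    (hfree : ∀ x ∈ C, x ≠ 0 → x ≠ allOnes (4*n) → ∀ i, π x i ≠ i)
    (hdist : ∀ x ∈ C, ∀ y ∈ C, x ≠ y → x ≠ y + allOnes (4*n) → hammingDist x y = 2*n)
    (a b : Fin (4*n) → ZMod 2) (ha : a ∈ C) (hb : b ∈ C)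
    (haord : ∀ m : ℕ, 0 < m → m < 4*n → ppow π a m ≠ 0)
    (ha4n : ppow π a (4*n) = 0)
    (ha2n : ppow π a (2*n) = allOnes (4*n))
    (hb2 : pmul π b b = allOnes (4*n))
    (hrel : pmul π a b = pmul π b (ppow π a (4*n - 1)))
    (hgen : ∀ x ∈ C, ∃ i j : ℕ, x = pmul π (ppow π a i) (ppow π b j))
    (h : ℕ) (hdvd : h ∣ n) :
    permAct ((π a)^h) (ppow π a n) ≠ ppow π a n := by

  -- auxiliary facts
  have hmem : ∀ m : ℕ, ppow π a m ∈ C := by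
    intro m
    induction m with
    | zero => simpa [ppow] using h0
    | succ k ih => exact hclosed a ha _ ih
  have hπpow : ∀ m : ℕ, π (ppow π a m) = (π a) ^ m := by
    intro m
    induction m with
    | zero => simpa [ppow] using hπ0
    | succ k ih =>
      have := hhom a ha (ppow π a k) (hmem k)
      rw [ppow, this, ih, pow_succ']
  have hppow_add : ∀ p q : ℕ, ppow π a (p + q) = pmul π (ppow π a p) (ppow π a q) := by
    intro p q
    induction p with
    | zero => simp [ppow, pmul, hπ0, permAct_one]
    | succ k ih =>
      have hcast : k + 1 + q = (k + q) + 1 := by ring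
      rw [hcast]
      show pmul π a (ppow π a (k + q)) = pmul π (pmul π a (ppow π a k)) (ppow π a q)
      rw [ih]
      have hπk : π (pmul π a (ppow π a k)) = π a * π (ppow π a k) :=
        hhom a ha (ppow π a k) (hmem k)
      conv_rhs => rw [pmul, hπk]
      simp only [pmul, permAct_mul, permAct_add, add_assoc]
  -- key identity: aⁿ + πₐⁿ(aⁿ) = allOnes
  have hkey : ppow π a n + permAct ((π a) ^ n) (ppow π a n) = allOnes (4 * n) := by
    have h1 := hppow_add n n
    rw [two_mul] at ha2n
    rw [h1] at ha2n
    simpa [pmul, hπpow n] using ha2n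
  intro hcontra
  obtain ⟨k, hk⟩ := hdvd
  have hfix : ∀ j : ℕ, permAct ((π a) ^ (h * j)) (ppow π a n) = ppow π a n := by
    intro j
    induction j with
    | zero => simp [permAct_one]
    | succ i ih =>
      have : (π a) ^ (h * (i + 1)) = (π a) ^ (h * i) * (π a) ^ h := by
        rw [← pow_add]; ring_nf
      rw [this, permAct_mul, hcontra, ih]
  have hn' := hfix k
  rw [← hk] at hn'
  rw [hn'] at hkey
  have hzero : ppow π a n + ppow π a n = 0 := by
    funext i
    show ppow π a n i + ppow π a n i = (0 : ZMod 2)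
    exact CharTwo.add_self_eq_zero _
  rw [hzero] at hkey
  have h01 := congrFun hkey ⟨0, by omega⟩
  simp [allOnes] at h01
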